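/- arXiv:2301.04641 — 3 statements merged into one kernel-verified Lean document; each statement's English description precedes it below -/
import Mathlib

section
/- There exist absolute constants c1, c2 > 0 such that the following holds. Let y, ỹ ∈ ℝ^M be random vectors and let (y_1, ỹ_1),…,(y_N, ỹ_N) be i.i.d. copies of (y, ỹ). Let λ > 0 and let τ_1,…,τ_N, τ̃_1,…,τ̃_N ∈ ℝ^M be dithering vectors, independent of each other and of the samples, each with i.i.d. coordinates uniform on [−λ, λ]. Define r_k = sign(y_k + τ_k) and r̃_k = sign(ỹ_k + τ̃_k). If N ≥ c1·log(M), then for every t ≥ 0, with probability at least 1 − 2e^{−c2 N t}, ‖(λ²/N)·Σ_{k=1}^N (r_k r̃_k^T − E[r r̃^T])‖_∞ < √(λ⁴·(c1·log(M)/N + t)), where the expectation E[r r̃^T] is over one sample and its dithers. -/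
open MeasureTheory ProbabilityTheory Matrix
open scoped ComplexOrder

noncomputable section

/-- Entrywise maximum-modulus norm of a complex matrix. -/
def maxNorm {M : ℕ} (A : Matrix (Fin M) (Fin M) ℂ) : ℝ :=
  ⨆ i, ⨆ j, ‖A i j‖

/-- Frobenius norm of a complex matrix. -/
def frobNorm {M : ℕ} (A : Matrix (Fin M) (Fin M) ℂ) : ℝ :=
  Real.sqrt (∑ i, ∑ j, ‖A i j‖ ^ 2)

/-- Spectral (operator) norm of a complex matrix. -/
def specNorm {M : ℕ} (A : Matrix (Fin M) (Fin M) ℂ) : ℝ :=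
  ‖Matrix.toEuclideanCLM (𝕜 := ℂ) (n := Fin M) A‖

/-- diag(C)^{-1/2}: the diagonal matrix with entries [C]_{ii}^{-1/2}. -/
def dInvSqrt {M : ℕ} (C : Matrix (Fin M) (Fin M) ℂ) : Matrix (Fin M) (Fin M) ℂ :=
  Matrix.diagonal fun i => ((Real.sqrt (C i i).re)⁻¹ : ℂ)

/-- Bussgang gain A = sqrt(2/π)·diag(C)^{-1/2}. -/
def busA {M : ℕ} (C : Matrix (Fin M) (Fin M) ℂ) : Matrix (Fin M) (Fin M) ℂ :=
  (Real.sqrt (2 / Real.pi) : ℂ) • dInvSqrt C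

/-- The arcsine-law map P_arcsine(C) = (2/π)[arcsin(D^{-1/2} Re(C) D^{-1/2}) + i·arcsin(D^{-1/2} Im(C) D^{-1/2})]. -/
def arcsineMap {M : ℕ} (C : Matrix (Fin M) (Fin M) ℂ) : Matrix (Fin M) (Fin M) ℂ :=
  Matrix.of fun i j =>
    ((2 / Real.pi : ℝ) : ℂ) *
      ((Real.arcsin ((C i j).re / (Real.sqrt (C i i).re * Real.sqrt (C j j).re)) : ℝ) +
        Complex.I *
          ((Real.arcsin ((C i j).im / (Real.sqrt (C i i).re * Real.sqrt (C j j).re)) : ℝ) : ℂ))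

/-- one-bit sign quantizer: sign(x) = 1 if x ≥ 0, else -1. -/
def rsign (x : ℝ) : ℝ := if 0 ≤ x then 1 else -1

/-- one-bit complex quantization with dithers: sign(Re(y)+τ^R) + i·sign(Im(y)+τ^I). -/
def quant {M : ℕ} (yv : Fin M → ℂ) (tR tI : Fin M → ℝ) : Fin M → ℂ :=
  fun i => (rsign ((yv i).re + tR i) : ℂ) + Complex.I * (rsign ((yv i).im + tI i) : ℂ)

/-- dithered covariance estimator Ĉ = ½ C̃ + ½ C̃ᴴ with C̃ = (λ²/N) Σ r_n r̃_nᴴ. -/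
def ditherEst {M N : ℕ} (lam : ℝ) (r rt : Fin N → Fin M → ℂ) : Matrix (Fin M) (Fin M) ℂ :=
  ((1 : ℂ)/2) • (Matrix.of (fun i j => ((lam ^ 2 / N : ℝ) : ℂ) * ∑ n, r n i * (starRingEnd ℂ) (rt n j))
    + (Matrix.of (fun i j => ((lam ^ 2 / N : ℝ) : ℂ) * ∑ n, r n i * (starRingEnd ℂ) (rt n j)))ᴴ)

/-- the uniform probability measure on [-λ, λ]. -/
def unifIcc (lam : ℝ) : Measure ℝ :=
  (ENNReal.ofReal (2 * lam))⁻¹ • (volume.restrict (Set.Icc (-lam) lam))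

/-- S-subgaussian coordinates: (E|Re(y)_j|^p)^{1/p}, (E|Im(y)_j|^p)^{1/p} ≤ S √p ‖C_y‖_∞^{1/2} for p ≥ 2. -/
def SubgaussianCoords {Ω : Type} [MeasureSpace Ω] {M : ℕ} (S : ℝ)
    (y : Ω → Fin M → ℂ) (Cy : Matrix (Fin M) (Fin M) ℂ) : Prop :=
  ∀ (p : ℝ), 2 ≤ p → ∀ j : Fin M,
    (∫ ω, |(y ω j).re| ^ p) ^ (1/p) ≤ S * Real.sqrt p * Real.sqrt (maxNorm Cy) ∧
    (∫ ω, |(y ω j).im| ^ p) ^ (1/p) ≤ S * Real.sqrt p * Real.sqrt (maxNorm Cy)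

/-- Entrywise maximum-absolute-value norm of a real matrix. -/
def maxNormR {M : ℕ} (A : Matrix (Fin M) (Fin M) ℝ) : ℝ :=
  ⨆ i, ⨆ j, |A i j|

/-- real one-bit quantization with dither: sign(y + τ), entrywise. -/
def quantR {M : ℕ} (yv t : Fin M → ℝ) : Fin M → ℝ := fun i => rsign (yv i + t i)

/-- Index type for the joint family of N pairs of real samples and their 2·M·N real dither
coordinates. -/
def famTypeR (N M : ℕ) : Fin N ⊕ (Fin N × Fin 2 × Fin M) → Type
  | .inl _ => (Fin M → ℝ) × (Fin M → ℝ)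
  | .inr _ => ℝ

instance famMSR (N M : ℕ) : ∀ idx, MeasurableSpace (famTypeR N M idx)
  | .inl _ => inferInstanceAs (MeasurableSpace ((Fin M → ℝ) × (Fin M → ℝ)))
  | .inr _ => inferInstanceAs (MeasurableSpace ℝ)

/-- The family of the N sample pairs and all of their dither coordinates. -/
def famFunR {Ω : Type} {N M : ℕ} (Y Yt : Fin N → Ω → Fin M → ℝ)
    (d : Fin N → Fin 2 → Ω → Fin M → ℝ) : ∀ idx, Ω → famTypeR N M idx
  | .inl n => fun ω => (Y n ω, Yt n ω)
  | .inr (n, k, m) => fun ω => d n k ω m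

/-- Index type for one generic pair of real random vectors and its 2·M dither coordinates. -/
def famTypeR1 (M : ℕ) : Unit ⊕ (Fin 2 × Fin M) → Type
  | .inl _ => (Fin M → ℝ) × (Fin M → ℝ)
  | .inr _ => ℝ

instance famMSR1 (M : ℕ) : ∀ idx, MeasurableSpace (famTypeR1 M idx)
  | .inl _ => inferInstanceAs (MeasurableSpace ((Fin M → ℝ) × (Fin M → ℝ)))
  | .inr _ => inferInstanceAs (MeasurableSpace ℝ)

/-- The family consisting of the generic pair (y, ỹ) and its dither coordinates. -/
def famFunR1 {Ω : Type} {M : ℕ} (y yt : Ω → Fin M → ℝ)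
    (g : Fin 2 → Ω → Fin M → ℝ) : ∀ idx, Ω → famTypeR1 M idx
  | .inl _ => fun ω => (y ω, yt ω)
  | .inr (k, m) => fun ω => g k ω m

/-!
Each entry of the matrix is `λ² / N` times a sum of the `N` centred variables
`r_k(i) r̃_k(j) - E[r(i) r̃(j)]`. The `k`-th summand is a function of the `k`-th block of the
independent family (sample `k` and its dithers), so the summands are independent, and a product
of two signs lies in `[-1, 1]`; by Hoeffding's lemma the sum is sub-Gaussian with variance proxy
`N`. The centring is the right one because sample `k` together with its two dithers has the
same joint law as the generic pair with its dithers: in both families the three parts are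
independent with equal marginals. A union bound over the `M²` entries costs a factor
`M² = exp (2 log M)`, which `c₁ = 4` absorbs; then `c₂ = 1 / 2`.
-/

open scoped NNReal ENNReal

namespace ProbabilityTheory

lemma indepFun_finset_sum_of_measurable_iSup {ι κ Ω : Type*} {mΩ : MeasurableSpace Ω}
    {μ : Measure Ω} {m : ι → MeasurableSpace Ω} (h_le : ∀ i, m i ≤ mΩ) (h_indep : iIndep m μ)
    (key : ι → κ) {X : κ → Ω → ℝ} (hX : ∀ k, Measurable[⨆ i ∈ key ⁻¹' {k}, m i] (X k))
    {k : κ} {T : Finset κ} (hk : k ∉ T) :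
    IndepFun (X k) (fun ω ↦ ∑ n ∈ T, X n ω) μ := by
  have hdisj : Disjoint (key ⁻¹' {k}) (key ⁻¹' (T : Set κ)) :=
    (Set.disjoint_singleton_left.mpr hk).preimage key
  have hsum : Measurable[⨆ i ∈ key ⁻¹' (T : Set κ), m i] fun ω ↦ ∑ n ∈ T, X n ω :=
    Finset.measurable_fun_sum T fun n hn ↦ (hX n).mono
      (biSup_mono fun i hi ↦ show key i ∈ T from (Set.mem_singleton_iff.mp hi).symm ▸ hn)
      le_rfl
  rw [IndepFun_iff_Indep]
  exact indep_of_indep_of_le_right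
    (indep_of_indep_of_le_left (indep_iSup_of_disjoint h_le h_indep hdisj) (hX k).comap_le)
    hsum.comap_le

namespace HasSubgaussianMGF

variable {Ω : Type*} {mΩ : MeasurableSpace Ω} {μ : Measure Ω}

lemma sum_of_indepFun_finset_sum {κ : Type*} [IsZeroOrProbabilityMeasure μ] {X : κ → Ω → ℝ}
    {c : κ → ℝ≥0} (h_subG : ∀ k, HasSubgaussianMGF (X k) (c k) μ)
    (h_indep : ∀ k (T : Finset κ), k ∉ T → IndepFun (X k) (fun ω ↦ ∑ n ∈ T, X n ω) μ)
    (s : Finset κ) :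
    HasSubgaussianMGF (fun ω ↦ ∑ k ∈ s, X k ω) (∑ k ∈ s, c k) μ := by
  classical
  induction s using Finset.induction_on with
  | empty => simp only [Finset.sum_empty]; exact fun_zero
  | insert k s hk ih =>
    simp_rw [Finset.sum_insert hk]
    exact (h_subG k).add_of_indepFun ih (h_indep k s hk)

lemma measure_abs_ge_le [IsFiniteMeasure μ] {X : Ω → ℝ} {c : ℝ≥0}
    (h : HasSubgaussianMGF X c μ) {ε : ℝ} (hε : 0 ≤ ε) :
    μ {ω | ε ≤ |X ω|} ≤ ENNReal.ofReal (2 * Real.exp (-ε ^ 2 / (2 * c))) := by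
  have htail : ∀ {Z : Ω → ℝ}, HasSubgaussianMGF Z c μ →
      μ {ω | ε ≤ Z ω} ≤ ENNReal.ofReal (Real.exp (-ε ^ 2 / (2 * c))) := fun hZ ↦ by
    rw [← ofReal_measureReal]
    exact ENNReal.ofReal_le_ofReal (hZ.measure_ge_le hε)
  calc μ {ω | ε ≤ |X ω|} ≤ μ ({ω | ε ≤ X ω} ∪ {ω | ε ≤ (-X) ω}) :=
        measure_mono fun ω hω ↦ le_abs.mp (Set.mem_ofPred.mp hω)
    _ ≤ μ {ω | ε ≤ X ω} + μ {ω | ε ≤ (-X) ω} := measure_union_le _ _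
    _ ≤ _ := by
        rw [two_mul, ENNReal.ofReal_add (Real.exp_pos _).le (Real.exp_pos _).le]
        exact add_le_add (htail h) (htail h.neg)

end HasSubgaussianMGF

end ProbabilityTheory

lemma maxNormR_lt {M : ℕ} {A : Matrix (Fin M) (Fin M) ℝ} {c : ℝ} (hc : 0 < c)
    (h : ∀ i j, |A i j| < c) : maxNormR A < c := by
  rcases isEmpty_or_nonempty (Fin M) with hM | hM
  · rwa [maxNormR, Real.iSup_of_isEmpty]
  obtain ⟨i, hi⟩ := exists_eq_ciSup_of_finite (f := fun i ↦ ⨆ j, |A i j|)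
  obtain ⟨j, hj⟩ := exists_eq_ciSup_of_finite (f := fun j ↦ |A i j|)
  rw [maxNormR, ← hi, ← hj]
  exact h i j

lemma one_sub_sq_mul_le_measure_maxNormR_lt {Ω : Type*} {mΩ : MeasurableSpace Ω}
    {μ : Measure Ω} [IsProbabilityMeasure μ] {M : ℕ} (A : Ω → Matrix (Fin M) (Fin M) ℝ)
    {c : ℝ} (hc : 0 < c) {p : ℝ≥0∞} (h : ∀ i j, μ {ω | c ≤ |A ω i j|} ≤ p) :
    1 - (M : ℝ≥0∞) ^ 2 * p ≤ μ {ω | maxNormR (A ω) < c} := by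
  set bad := ⋃ i, ⋃ j, {ω | c ≤ |A ω i j|}
  have hbad : μ bad ≤ (M : ℝ≥0∞) ^ 2 * p :=
    calc μ bad ≤ ∑ i, ∑ j, μ {ω | c ≤ |A ω i j|} :=
          (measure_iUnion_fintype_le _ _).trans
            (Finset.sum_le_sum fun i _ ↦ measure_iUnion_fintype_le _ _)
      _ ≤ ∑ _i : Fin M, ∑ _j : Fin M, p := by gcongr with i _ j _; exact h i j
      _ = (M : ℝ≥0∞) ^ 2 * p := by simp [sq, mul_assoc]
  have hgood : badᶜ ⊆ {ω | maxNormR (A ω) < c} := fun ω hω ↦ by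
    simp only [bad, Set.mem_compl_iff, Set.mem_iUnion, Set.mem_ofPred_eq, not_exists,
      not_le] at hω
    exact maxNormR_lt hc hω
  calc 1 - (M : ℝ≥0∞) ^ 2 * p ≤ 1 - μ bad := tsub_le_tsub_left hbad 1
    _ ≤ μ badᶜ := by
        rw [tsub_le_iff_left, ← measure_univ (μ := μ), ← Set.union_compl_self bad]
        exact measure_union_le _ _
    _ ≤ _ := measure_mono hgood

lemma natCast_sq_mul_exp_neg_two_mul_log_add_le (M : ℕ) (x : ℝ) :
    (M : ℝ) ^ 2 * Real.exp (-(2 * Real.log M + x)) ≤ Real.exp (-x) := by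
  rcases Nat.eq_zero_or_pos M with rfl | hM
  · simp [Real.exp_nonneg]
  have hM' : (0 : ℝ) < M := Nat.cast_pos.mpr hM
  rw [neg_add, Real.exp_add, ← Real.log_rpow hM', Real.exp_neg, Real.exp_log (by positivity),
    ← mul_assoc, Real.rpow_two, mul_inv_cancel₀ (by positivity), one_mul]

lemma ofReal_one_sub_two_mul_exp_neg_le (M : ℕ) (x : ℝ) :
    ENNReal.ofReal (1 - 2 * Real.exp (-x))
      ≤ 1 - (M : ℝ≥0∞) ^ 2 * ENNReal.ofReal (2 * Real.exp (-(2 * Real.log M + x))) := by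
  rw [ENNReal.ofReal_sub _ (by positivity), ENNReal.ofReal_one, ← ENNReal.ofReal_natCast,
    ← ENNReal.ofReal_pow (by positivity), ← ENNReal.ofReal_mul (by positivity)]
  exact tsub_le_tsub_left (ENNReal.ofReal_le_ofReal
    (by nlinarith [natCast_sq_mul_exp_neg_two_mul_log_add_le M x])) 1

@[fun_prop]
lemma measurable_rsign : Measurable rsign :=
  Measurable.ite (measurableSet_le measurable_const measurable_id) measurable_const measurable_const

lemma rsign_mul_rsign_mem_Icc (a b : ℝ) : rsign a * rsign b ∈ Set.Icc (-1 : ℝ) 1 := by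
  unfold rsign; split_ifs <;> norm_num

def signCorrDeviation {Ω : Type} [MeasureSpace Ω] {N M : ℕ} (lam : ℝ) (y yt : Ω → Fin M → ℝ)
    (Y Yt : Fin N → Ω → Fin M → ℝ) (d : Fin N → Fin 2 → Ω → Fin M → ℝ)
    (g : Fin 2 → Ω → Fin M → ℝ) (ω : Ω) : Matrix (Fin M) (Fin M) ℝ :=
  Matrix.of fun i j ↦ (lam ^ 2 / N) * ∑ k,
    (quantR (Y k ω) (d k 0 ω) i * quantR (Yt k ω) (d k 1 ω) j
      - ∫ ω', quantR (y ω') (g 0 ω') i * quantR (yt ω') (g 1 ω') j)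

section Sampling

variable {Ω : Type} {N M : ℕ} {y yt : Ω → Fin M → ℝ} {Y Yt : Fin N → Ω → Fin M → ℝ}
  {d : Fin N → Fin 2 → Ω → Fin M → ℝ} {g : Fin 2 → Ω → Fin M → ℝ}

lemma measurable_famFunR [MeasurableSpace Ω] (hY : ∀ n, Measurable (Y n))
    (hYt : ∀ n, Measurable (Yt n)) (hd : ∀ n k m, Measurable fun ω ↦ d n k ω m) :
    ∀ idx, Measurable (famFunR Y Yt d idx)
  | .inl n => (hY n).prodMk (hYt n)
  | .inr (n, k, m) => hd n k m

lemma measurable_famFunR1 [MeasurableSpace Ω] (hy : Measurable y) (hyt : Measurable yt)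
    (hg : ∀ k m, Measurable fun ω ↦ g k ω m) : ∀ idx, Measurable (famFunR1 y yt g idx)
  | .inl _ => hy.prodMk hyt
  | .inr (k, m) => hg k m

def famSample {N M : ℕ} : Fin N ⊕ (Fin N × Fin 2 × Fin M) → Fin N := Sum.elim id Prod.fst

lemma measurable_iSup_quantR_mul (i j : Fin M) (k : Fin N) :
    Measurable[⨆ idx ∈ famSample ⁻¹' {k}, (famMSR N M idx).comap (famFunR Y Yt d idx)]
      fun ω ↦ quantR (Y k ω) (d k 0 ω) i * quantR (Yt k ω) (d k 1 ω) j := by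
  set 𝓕 : MeasurableSpace Ω :=
    ⨆ idx ∈ famSample ⁻¹' {k}, (famMSR N M idx).comap (famFunR Y Yt d idx)
  have hcoord : ∀ idx ∈ famSample ⁻¹' {k}, Measurable[𝓕] (famFunR Y Yt d idx) :=
    fun idx hidx ↦ (comap_measurable _).mono
      (le_iSup₂ (f := fun idx _ ↦ (famMSR N M idx).comap (famFunR Y Yt d idx)) idx hidx) le_rfl
  have hpair := hcoord (.inl k) rfl
  have hd0 : Measurable[𝓕] fun ω ↦ d k 0 ω i := hcoord (.inr (k, 0, i)) rfl
  have hd1 : Measurable[𝓕] fun ω ↦ d k 1 ω j := hcoord (.inr (k, 1, j)) rfl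
  exact (measurable_rsign.comp
      (((measurable_pi_apply i).comp (measurable_fst.comp hpair)).add hd0)).mul
    (measurable_rsign.comp (((measurable_pi_apply j).comp (measurable_snd.comp hpair)).add hd1))

lemma identDistrib_sample_generic [MeasureSpace Ω] [IsProbabilityMeasure (ℙ : Measure Ω)]
    {ν : Measure ℝ} (hy : Measurable y) (hyt : Measurable yt)
    (hY : ∀ n, Measurable (Y n)) (hYt : ∀ n, Measurable (Yt n))
    (hd : ∀ n k m, Measurable fun ω ↦ d n k ω m) (hg : ∀ k m, Measurable fun ω ↦ g k ω m)
    (hcopy : ∀ n, Measure.map (fun ω ↦ (Y n ω, Yt n ω)) ℙ = Measure.map (fun ω ↦ (y ω, yt ω)) ℙ)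
    (hIndep : iIndepFun (m := famMSR N M) (famFunR Y Yt d) ℙ)
    (hIndep1 : iIndepFun (m := famMSR1 M) (famFunR1 y yt g) ℙ)
    (hdlaw : ∀ n k m, Measure.map (fun ω ↦ d n k ω m) ℙ = ν)
    (hglaw : ∀ k m, Measure.map (fun ω ↦ g k ω m) ℙ = ν) (k : Fin N) (i j : Fin M) :
    IdentDistrib (fun ω ↦ ((Y k ω, Yt k ω), (d k 0 ω i, d k 1 ω j)))
      (fun ω ↦ ((y ω, yt ω), (g 0 ω i, g 1 ω j))) ℙ ℙ := by
  have hpair : IdentDistrib (fun ω ↦ (Y k ω, Yt k ω)) (fun ω ↦ (y ω, yt ω)) ℙ ℙ :=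
    ⟨((hY k).prodMk (hYt k)).aemeasurable, (hy.prodMk hyt).aemeasurable, hcopy k⟩
  have hdither : ∀ (l : Fin 2) (m : Fin M),
      IdentDistrib (fun ω ↦ d k l ω m) (fun ω ↦ g l ω m) ℙ ℙ := fun l m ↦
    ⟨(hd k l m).aemeasurable, (hg l m).aemeasurable, (hdlaw k l m).trans (hglaw l m).symm⟩
  refine hpair.prodMk ((hdither 0 i).prodMk (hdither 1 j) ?_ ?_) ?_ ?_
  · exact hIndep.indepFun (i := .inr (k, 0, i)) (j := .inr (k, 1, j)) (by simp)
  · exact hIndep1.indepFun (i := .inr (0, i)) (j := .inr (1, j)) (by simp)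
  · exact (hIndep.indepFun_prodMk (measurable_famFunR hY hYt hd) (.inr (k, 0, i))
      (.inr (k, 1, j)) (.inl k) (by simp) (by simp)).symm
  · exact (hIndep1.indepFun_prodMk (measurable_famFunR1 hy hyt hg) (.inr (0, i))
      (.inr (1, j)) (.inl ()) (by simp) (by simp)).symm

lemma integral_quantR_mul_eq_of_identDistrib [MeasureSpace Ω] {k : Fin N} {i j : Fin M}
    (h : IdentDistrib (fun ω ↦ ((Y k ω, Yt k ω), (d k 0 ω i, d k 1 ω j)))
      (fun ω ↦ ((y ω, yt ω), (g 0 ω i, g 1 ω j))) ℙ ℙ) :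
    ∫ ω, quantR (Y k ω) (d k 0 ω) i * quantR (Yt k ω) (d k 1 ω) j
      = ∫ ω, quantR (y ω) (g 0 ω) i * quantR (yt ω) (g 1 ω) j := by
  exact (h.comp (u := fun x ↦ rsign (x.1.1 i + x.2.1) * rsign (x.1.2 j + x.2.2))
    (by fun_prop)).integral_eq

lemma hasSubgaussianMGF_sum_sub_integral_quantR_mul [MeasureSpace Ω]
    [IsProbabilityMeasure (ℙ : Measure Ω)] (hY : ∀ n, Measurable (Y n))
    (hYt : ∀ n, Measurable (Yt n)) (hd : ∀ n k m, Measurable fun ω ↦ d n k ω m)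
    (hIndep : iIndepFun (m := famMSR N M) (famFunR Y Yt d) ℙ) {i j : Fin M}
    (hid : ∀ k, IdentDistrib (fun ω ↦ ((Y k ω, Yt k ω), (d k 0 ω i, d k 1 ω j)))
      (fun ω ↦ ((y ω, yt ω), (g 0 ω i, g 1 ω j))) ℙ ℙ) :
    HasSubgaussianMGF (fun ω ↦ ∑ k, (quantR (Y k ω) (d k 0 ω) i * quantR (Yt k ω) (d k 1 ω) j
      - ∫ ω', quantR (y ω') (g 0 ω') i * quantR (yt ω') (g 1 ω') j)) N ℙ := by
  set Z : Fin N → Ω → ℝ := fun k ω ↦ quantR (Y k ω) (d k 0 ω) i * quantR (Yt k ω) (d k 1 ω) j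
  set m := ∫ ω', quantR (y ω') (g 0 ω') i * quantR (yt ω') (g 1 ω') j
  have hZ : ∀ k, Measurable (Z k) := fun k ↦
    (measurable_iSup_quantR_mul i j k).mono (iSup₂_le fun idx _ ↦
      (measurable_famFunR hY hYt hd idx).comap_le) le_rfl
  have hsubG : ∀ k, HasSubgaussianMGF (fun ω ↦ Z k ω - m) 1 ℙ := fun k ↦ by
    have h := hasSubgaussianMGF_of_mem_Icc (hZ k).aemeasurable
      (ae_of_all ℙ fun ω ↦ rsign_mul_rsign_mem_Icc _ _)
    rw [integral_quantR_mul_eq_of_identDistrib (hid k)] at h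
    convert h using 1
    norm_num
  have hindep : ∀ k (T : Finset (Fin N)), k ∉ T →
      IndepFun (fun ω ↦ Z k ω - m) (fun ω ↦ ∑ n ∈ T, (Z n ω - m)) ℙ := fun k T hk ↦
    indepFun_finset_sum_of_measurable_iSup
      (fun idx ↦ (measurable_famFunR hY hYt hd idx).comap_le)
      ((iIndepFun_iff_iIndep _ _ _).mp hIndep) famSample
      (fun n ↦ (measurable_iSup_quantR_mul i j n).sub_const m) hk
  simpa using HasSubgaussianMGF.sum_of_indepFun_finset_sum hsubG hindep Finset.univ

lemma measure_le_abs_signCorrDeviation_le [MeasureSpace Ω]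
    [IsProbabilityMeasure (ℙ : Measure Ω)] (hY : ∀ n, Measurable (Y n))
    (hYt : ∀ n, Measurable (Yt n)) (hd : ∀ n k m, Measurable fun ω ↦ d n k ω m)
    (hIndep : iIndepFun (m := famMSR N M) (famFunR Y Yt d) ℙ)
    (hid : ∀ k i j, IdentDistrib (fun ω ↦ ((Y k ω, Yt k ω), (d k 0 ω i, d k 1 ω j)))
      (fun ω ↦ ((y ω, yt ω), (g 0 ω i, g 1 ω j))) ℙ ℙ)
    {lam : ℝ} (hlam : lam ≠ 0) (hN : N ≠ 0) {ε : ℝ} (hε : 0 ≤ ε) (i j : Fin M) :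
    ℙ {ω | ε ≤ |signCorrDeviation lam y yt Y Yt d g ω i j|}
      ≤ ENNReal.ofReal (2 * Real.exp (-(ε ^ 2 * N / (2 * lam ^ 4)))) := by
  have h := ((hasSubgaussianMGF_sum_sub_integral_quantR_mul hY hYt hd hIndep
    (hid · i j)).const_mul (lam ^ 2 / N)).measure_abs_ge_le hε
  -- `NNReal.coe_mul` does not fire on the `Subtype.mk` that `const_mul` produces.
  have hc : ((⟨(lam ^ 2 / N) ^ 2, sq_nonneg _⟩ * N : ℝ≥0) : ℝ) = (lam ^ 2 / N) ^ 2 * N := rfl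
  rwa [hc, show -ε ^ 2 / (2 * ((lam ^ 2 / N) ^ 2 * N)) = -(ε ^ 2 * N / (2 * lam ^ 4)) by
    field_simp] at h

end Sampling

/-- concentration of the dithered one-bit sample correlation matrix. -/
theorem stmt5 :
    ∃ c1 c2 : ℝ, 0 < c1 ∧ 0 < c2 ∧
      ∀ (M N : ℕ) (Ω : Type) [MeasureSpace Ω] [IsProbabilityMeasure (ℙ : Measure Ω)],
      ∀ (y yt : Ω → Fin M → ℝ) (Y Yt : Fin N → Ω → Fin M → ℝ)
        (d : Fin N → Fin 2 → Ω → Fin M → ℝ) (g : Fin 2 → Ω → Fin M → ℝ) (lam t : ℝ),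
        0 < lam →
        Measurable y → Measurable yt →
        (∀ n, Measurable (Y n)) → (∀ n, Measurable (Yt n)) →
        (∀ n k m, Measurable fun ω => d n k ω m) →
        (∀ k m, Measurable fun ω => g k ω m) →
        -- (Y n, Yt n) are copies of the pair (y, yt) …
        (∀ n, Measure.map (fun ω => (Y n ω, Yt n ω)) ℙ
              = Measure.map (fun ω => (y ω, yt ω)) ℙ) →
        -- … and, together with all their dither coordinates, they are independent
        ProbabilityTheory.iIndepFun (m := famMSR N M) (famFunR Y Yt d) ℙ →
        -- the generic pair is independent of its own dither coordinates
        ProbabilityTheory.iIndepFun (m := famMSR1 M) (famFunR1 y yt g) ℙ →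
        -- every dither coordinate is uniform on [-λ, λ]
        (∀ n k m, Measure.map (fun ω => d n k ω m) ℙ = unifIcc lam) →
        (∀ k m, Measure.map (fun ω => g k ω m) ℙ = unifIcc lam) →
        -- N ≥ c1 log M
        c1 * Real.log M ≤ (N : ℝ) →
        0 ≤ t →
        ENNReal.ofReal (1 - 2 * Real.exp (-(c2 * N * t))) ≤
          ℙ {ω | maxNormR (Matrix.of fun i j =>
                    (lam ^ 2 / N) * ∑ k,
                      (quantR (Y k ω) (d k 0 ω) i * quantR (Yt k ω) (d k 1 ω) j
                        - ∫ ω', quantR (y ω') (g 0 ω') i * quantR (yt ω') (g 1 ω') j))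
                  < Real.sqrt (lam ^ 4 * (c1 * Real.log M / N + t))} := by
  refine ⟨4, 1 / 2, by norm_num, by norm_num, ?_⟩
  intro M N Ω _ _ y yt Y Yt d g lam t hlam hy hyt hY hYt hd hg hcopy hIndep hIndep1 hdunif
    hgunif _ ht
  rcases le_or_gt (1 - 2 * Real.exp (-(1 / 2 * N * t))) 0 with htriv | hprob
  · rw [ENNReal.ofReal_of_nonpos htriv]
    exact zero_le
  have hN : N ≠ 0 := by rintro rfl; norm_num at hprob
  have ht : 0 < t := ht.lt_of_ne (by rintro rfl; norm_num at hprob)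
  set ε := Real.sqrt (lam ^ 4 * (4 * Real.log M / N + t))
  have hε : 0 < ε := by positivity
  have hexp : ε ^ 2 * N / (2 * lam ^ 4) = 2 * Real.log M + 1 / 2 * N * t := by
    rw [Real.sq_sqrt (by positivity)]
    field_simp
    ring
  have htail := measure_le_abs_signCorrDeviation_le hY hYt hd hIndep
    (identDistrib_sample_generic hy hyt hY hYt hd hg hcopy hIndep hIndep1 hdunif hgunif)
    hlam.ne' hN hε.le
  simp only [hexp] at htail
  exact (ofReal_one_sub_two_mul_exp_neg_le M _).trans
    (one_sub_sq_mul_le_measure_maxNormR_lt _ hε htail)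
end
end

section
/- Let α > 0 and let C ∈ ℂ^{M×M} be Hermitian positive semidefinite with min_i [C]_{i,i} ≥ α. Then the arcsine-law matrix P_arcsine(C) satisfies ‖P_arcsine(C)‖ ≤ (2/α)·‖C‖, where ‖·‖ is the spectral (operator) norm. -/
open MeasureTheory ProbabilityTheory Matrix
open scoped ComplexOrder

noncomputable section

/-!
Normalize `C` to `c = D^{-1/2} C D^{-1/2}`: it is positive semidefinite with unit diagonal,
`‖c‖ ≤ ‖C‖ / α`, and `P_arcsine(c) = P_arcsine(C)`. Expand `arcsin t = ∑ aₖ t^(2k+1)` with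
`aₖ ≥ 0` and `∑ aₖ = arcsin 1 = π / 2`. Since `Re z = (z + z̄) / 2` and `Im z = (z - z̄) / (2i)`,
the entrywise powers `(Re c)^∘m` and `(Im c)^∘m` are combinations, with coefficients of total
modulus one, of the Hadamard products `c^∘j ⊙ c̄^∘(m-j)`. For `m ≥ 1` each of these is `c` or
`c̄` Schur-multiplied by a positive semidefinite matrix with unit diagonal (Schur product
theorem), and such a Schur multiplier does not increase the spectral norm. Hence
`‖P_arcsine(c)‖ ≤ (2/π) ∑ aₖ · 2‖c‖ = 2‖c‖`.

For the arcsine series on `[0, 1)`, the remainder is bounded through its derivative: with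
`bₖ = C(2k, k) / 4ᵏ`, the function `√(1 - v) ∑_{k ≤ n} bₖ vᵏ` has the single-term derivative
`-(2n + 1) bₙ vⁿ / (2√(1 - v))`. The endpoint `t = 1` follows by monotone limits.
-/

open Set Filter Topology

lemma nonneg_and_le_mul_of_hasDerivAt {f f' : ℝ → ℝ} {x C : ℝ} (hx : 0 ≤ x) (h0 : f 0 = 0)
    (hf : ∀ t ∈ Icc 0 x, HasDerivAt f (f' t) t) (hf' : ∀ t ∈ Icc 0 x, 0 ≤ f' t ∧ f' t ≤ C) :
    0 ≤ f x ∧ f x ≤ C * x := by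
  have hcont : ContinuousOn f (Icc 0 x) := fun t ht => (hf t ht).continuousAt.continuousWithinAt
  have hdiff : DifferentiableOn ℝ f (interior (Icc 0 x)) := fun t ht =>
    (hf t (interior_subset ht)).differentiableAt.differentiableWithinAt
  have hderiv : ∀ t ∈ interior (Icc 0 x), deriv f t = f' t := fun t ht =>
    (hf t (interior_subset ht)).deriv
  have h0x : (0 : ℝ) ∈ Icc 0 x := left_mem_Icc.2 hx
  have hxx : x ∈ Icc 0 x := right_mem_Icc.2 hx
  constructor
  · have := (convex_Icc 0 x).mul_sub_le_image_sub_of_le_deriv hcont hdiff (C := 0)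
      (fun t ht => hderiv t ht ▸ (hf' t (interior_subset ht)).1) 0 h0x x hxx hx
    simpa [h0] using this
  · have := (convex_Icc 0 x).image_sub_le_mul_sub_of_deriv_le hcont hdiff (C := C)
      (fun t ht => hderiv t ht ▸ (hf' t (interior_subset ht)).2) 0 h0x x hxx hx
    simpa [h0] using this

namespace Real

def invSqrtOneSubCoeff (k : ℕ) : ℝ := k.centralBinom / 4 ^ k

def arcsinCoeff (k : ℕ) : ℝ := invSqrtOneSubCoeff k / (2 * k + 1)

lemma invSqrtOneSubCoeff_nonneg (k : ℕ) : 0 ≤ invSqrtOneSubCoeff k := by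
  unfold invSqrtOneSubCoeff; positivity

lemma invSqrtOneSubCoeff_le_one (k : ℕ) : invSqrtOneSubCoeff k ≤ 1 := by
  unfold invSqrtOneSubCoeff
  rw [div_le_one (by positivity)]
  exact_mod_cast k.centralBinom_le_four_pow

lemma invSqrtOneSubCoeff_succ (k : ℕ) :
    (2 * k + 2) * invSqrtOneSubCoeff (k + 1) = (2 * k + 1) * invSqrtOneSubCoeff k := by
  have h : ((k + 1 : ℕ) : ℝ) * (k + 1).centralBinom = 2 * (2 * k + 1) * k.centralBinom := by
    exact_mod_cast k.succ_mul_centralBinom_succ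
  unfold invSqrtOneSubCoeff
  push_cast at h
  rw [pow_succ]
  field_simp
  linear_combination 2 * h

lemma arcsinCoeff_nonneg (k : ℕ) : 0 ≤ arcsinCoeff k :=
  div_nonneg (invSqrtOneSubCoeff_nonneg k) (by positivity)

lemma hasDerivAt_sqrt_one_sub_mul_partialSum (n : ℕ) {v : ℝ} (hv : v < 1) :
    HasDerivAt (fun v => √(1 - v) * ∑ k ∈ Finset.range (n + 1), invSqrtOneSubCoeff k * v ^ k)
      (-((2 * n + 1) * invSqrtOneSubCoeff n * v ^ n / (2 * √(1 - v)))) v := by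
  have hpos : 0 < 1 - v := by linarith
  have hsqrt : HasDerivAt (fun v => √(1 - v)) (-(1 / (2 * √(1 - v)))) v := by
    convert ((hasDerivAt_id v).const_sub 1).sqrt hpos.ne' using 1
    · simp
    · simp [neg_div]
  induction n with
  | zero => convert hsqrt using 1 <;> simp [invSqrtOneSubCoeff]
  | succ n ih =>
    simp_rw [Finset.sum_range_succ _ (n + 1), mul_add]
    refine (ih.fun_add (hsqrt.fun_mul ((hasDerivAt_pow (n + 1) v).const_mul
      (invSqrtOneSubCoeff (n + 1))))).congr_deriv ?_
    field_simp
    rw [sq_sqrt hpos.le]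
    push_cast
    linear_combination v ^ n * invSqrtOneSubCoeff_succ n

lemma one_sub_sqrt_mul_partialSum_mem (n : ℕ) {v : ℝ} (h0 : 0 ≤ v) (h1 : v < 1) :
    0 ≤ 1 - √(1 - v) * ∑ k ∈ Finset.range (n + 1), invSqrtOneSubCoeff k * v ^ k ∧
      1 - √(1 - v) * ∑ k ∈ Finset.range (n + 1), invSqrtOneSubCoeff k * v ^ k ≤
        (2 * n + 1) * v ^ n / √(1 - v) := by
  have key : 0 ≤ 1 - √(1 - v) * ∑ k ∈ Finset.range (n + 1), invSqrtOneSubCoeff k * v ^ k ∧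
      1 - √(1 - v) * ∑ k ∈ Finset.range (n + 1), invSqrtOneSubCoeff k * v ^ k ≤
        (2 * n + 1) * v ^ n / √(1 - v) * v := by
    refine nonneg_and_le_mul_of_hasDerivAt h0
      (f := fun s => 1 - √(1 - s) * ∑ k ∈ Finset.range (n + 1), invSqrtOneSubCoeff k * s ^ k)
      (by simp [Finset.sum_range_succ', invSqrtOneSubCoeff])
      (f' := fun s => (2 * n + 1) * invSqrtOneSubCoeff n * s ^ n / (2 * √(1 - s)))
      (fun s hs => ?_) (fun s hs => ?_)
    · simpa using (hasDerivAt_sqrt_one_sub_mul_partialSum n (hs.2.trans_lt h1)).const_sub 1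
    · have := invSqrtOneSubCoeff_nonneg n
      have := hs.1
      have hv : 0 < √(1 - v) := sqrt_pos.2 (by linarith)
      refine ⟨by positivity, ?_⟩
      calc _ ≤ (2 * n + 1) * 1 * v ^ n / (1 * √(1 - v)) := by
            gcongr
            · exact invSqrtOneSubCoeff_le_one n
            · exact hs.2
            · norm_num
            · linarith [hs.2]
        _ = _ := by ring
  exact ⟨key.1, key.2.trans (mul_le_of_le_one_right (by positivity) h1.le)⟩

lemma hasDerivAt_arcsinPartialSum (n : ℕ) (x : ℝ) :
    HasDerivAt (fun x => ∑ k ∈ Finset.range (n + 1), arcsinCoeff k * x ^ (2 * k + 1))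
      (∑ k ∈ Finset.range (n + 1), invSqrtOneSubCoeff k * (x ^ 2) ^ k) x := by
  refine (HasDerivAt.fun_sum fun k _ => (hasDerivAt_pow (2 * k + 1) x).const_mul
    (arcsinCoeff k)).congr_deriv (Finset.sum_congr rfl fun k _ => ?_)
  rw [arcsinCoeff, Nat.add_sub_cancel, ← pow_mul]
  push_cast
  field_simp

lemma arcsin_sub_partialSum_mem (n : ℕ) {x : ℝ} (h0 : 0 ≤ x) (h1 : x < 1) :
    0 ≤ arcsin x - ∑ k ∈ Finset.range (n + 1), arcsinCoeff k * x ^ (2 * k + 1) ∧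
      arcsin x - ∑ k ∈ Finset.range (n + 1), arcsinCoeff k * x ^ (2 * k + 1) ≤
        (2 * n + 1) * (x ^ 2) ^ n / (1 - x ^ 2) * x := by
  refine nonneg_and_le_mul_of_hasDerivAt h0
    (f := fun x => arcsin x - ∑ k ∈ Finset.range (n + 1), arcsinCoeff k * x ^ (2 * k + 1))
    (by simp) (f' := fun t => (1 - √(1 - t ^ 2) *
      ∑ k ∈ Finset.range (n + 1), invSqrtOneSubCoeff k * (t ^ 2) ^ k) / √(1 - t ^ 2))
    (fun t ht => ?_) (fun t ht => ?_)
  · have ht1 : t < 1 := ht.2.trans_lt h1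
    have hs : 0 < √(1 - t ^ 2) := sqrt_pos.2 (by nlinarith [ht.1])
    refine ((hasDerivAt_arcsin (by linarith [ht.1]) ht1.ne).sub
      (hasDerivAt_arcsinPartialSum n t)).congr_deriv ?_
    field_simp
  · have ht2 : t ^ 2 ≤ x ^ 2 := pow_le_pow_left₀ ht.1 ht.2 2
    have hx2 : x ^ 2 < 1 := by nlinarith
    have hs : 0 < √(1 - t ^ 2) := sqrt_pos.2 (by linarith)
    obtain ⟨hg0, hg1⟩ := one_sub_sqrt_mul_partialSum_mem n (sq_nonneg t) (by linarith)
    refine ⟨div_nonneg hg0 hs.le, ?_⟩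
    calc _ ≤ (2 * n + 1) * (t ^ 2) ^ n / √(1 - t ^ 2) / √(1 - t ^ 2) := by gcongr
      _ = (2 * n + 1) * (t ^ 2) ^ n / (1 - t ^ 2) := by
        rw [div_div, mul_self_sqrt (by linarith)]
      _ ≤ (2 * n + 1) * (x ^ 2) ^ n / (1 - x ^ 2) := by
        gcongr

lemma hasSum_arcsin_of_nonneg_of_lt_one {x : ℝ} (h0 : 0 ≤ x) (h1 : x < 1) :
    HasSum (fun k => arcsinCoeff k * x ^ (2 * k + 1)) (arcsin x) := by
  rw [hasSum_iff_tendsto_nat_of_nonneg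
    (fun k => mul_nonneg (arcsinCoeff_nonneg k) (pow_nonneg h0 _)), ← tendsto_add_atTop_iff_nat 1]
  have hx2 : x ^ 2 < 1 := by nlinarith
  have hrem : Tendsto (fun n : ℕ => (2 * n + 1) * (x ^ 2) ^ n / (1 - x ^ 2) * x) atTop (𝓝 0) := by
    have h := (((tendsto_self_mul_const_pow_of_lt_one (sq_nonneg x) hx2).const_mul 2).add
      (tendsto_pow_atTop_nhds_zero_of_lt_one (sq_nonneg x) hx2)).div_const (1 - x ^ 2)
      |>.mul_const x
    simp only [mul_zero, add_zero, zero_div, zero_mul] at h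
    convert h using 2
    ring
  refine tendsto_of_tendsto_of_tendsto_of_le_of_le (by simpa using hrem.const_sub (arcsin x))
    tendsto_const_nhds (fun n => ?_) (fun n => ?_)
  · linarith [(arcsin_sub_partialSum_mem n h0 h1).2]
  · linarith [(arcsin_sub_partialSum_mem n h0 h1).1]

lemma hasSum_arcsinCoeff : HasSum arcsinCoeff (π / 2) := by
  have hleft : ∀ᶠ x in 𝓝[<] (1 : ℝ), x ∈ Ioo 0 1 := Ioo_mem_nhdsLT one_pos
  have hpartial (n : ℕ) : ∑ k ∈ Finset.range n, arcsinCoeff k ≤ π / 2 := by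
    have hcont : Tendsto (fun x : ℝ => ∑ k ∈ Finset.range n, arcsinCoeff k * x ^ (2 * k + 1))
        (𝓝[<] 1) (𝓝 (∑ k ∈ Finset.range n, arcsinCoeff k)) := by
      have hc : Continuous fun x : ℝ =>
          ∑ k ∈ Finset.range n, arcsinCoeff k * x ^ (2 * k + 1) := by fun_prop
      simpa using (hc.tendsto 1).mono_left nhdsWithin_le_nhds
    refine le_of_tendsto hcont (hleft.mono fun x hx => ?_)
    exact (sum_le_hasSum _ (fun k _ => mul_nonneg (arcsinCoeff_nonneg k) (pow_nonneg hx.1.le _))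
      (hasSum_arcsin_of_nonneg_of_lt_one hx.1.le hx.2)).trans (arcsin_le_pi_div_two x)
  have hs : Summable arcsinCoeff := summable_of_sum_range_le arcsinCoeff_nonneg hpartial
  refine hs.hasSum_iff.2 (le_antisymm (tsum_le_of_sum_range_le arcsinCoeff_nonneg hpartial) ?_)
  have harcsin : Tendsto arcsin (𝓝[<] 1) (𝓝 (π / 2)) := by
    simpa using (continuous_arcsin.tendsto 1).mono_left nhdsWithin_le_nhds
  refine le_of_tendsto harcsin (hleft.mono fun x hx => ?_)
  refine hasSum_le (fun k => ?_) (hasSum_arcsin_of_nonneg_of_lt_one hx.1.le hx.2) hs.hasSum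
  exact mul_le_of_le_one_right (arcsinCoeff_nonneg k) (pow_le_one₀ hx.1.le hx.2.le)

theorem hasSum_arcsin {x : ℝ} (hx : |x| ≤ 1) :
    HasSum (fun k => arcsinCoeff k * x ^ (2 * k + 1)) (arcsin x) := by
  have hnonneg {y : ℝ} (h0 : 0 ≤ y) (h1 : y ≤ 1) :
      HasSum (fun k => arcsinCoeff k * y ^ (2 * k + 1)) (arcsin y) := by
    rcases h1.lt_or_eq with h1 | rfl
    · exact hasSum_arcsin_of_nonneg_of_lt_one h0 h1
    · simpa using hasSum_arcsinCoeff
  obtain ⟨hx1, hx2⟩ := abs_le.1 hx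
  rcases le_total 0 x with h0 | h0
  · exact hnonneg h0 hx2
  · have := (hnonneg (neg_nonneg.2 h0) (by linarith)).neg
    simpa [arcsin_neg, Odd.neg_pow (odd_two_mul_add_one _)] using this

end Real

namespace ContinuousLinearMap

variable {𝕜 E F ι : Type*} [RCLike 𝕜] [NormedAddCommGroup E] [InnerProductSpace 𝕜 E]
  [CompleteSpace E] [NormedAddCommGroup F] [InnerProductSpace 𝕜 F] [CompleteSpace F]

lemma norm_sum_adjoint_comp_comp_le (T : E →L[𝕜] E) (S : ι → F →L[𝕜] E) (s : Finset ι)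
    (hS : ∀ x, ∑ k ∈ s, ‖S k x‖ ^ 2 ≤ ‖x‖ ^ 2) :
    ‖∑ k ∈ s, adjoint (S k) ∘L T ∘L S k‖ ≤ ‖T‖ := by
  refine opNorm_le_of_re_inner_le (norm_nonneg T) fun x y hx hy => ?_
  have hterm (k : ι) : ‖(inner 𝕜 (T (S k x)) (S k y))‖ ≤ ‖T‖ * ((‖S k x‖ ^ 2 + ‖S k y‖ ^ 2) / 2) :=
    calc _ ≤ ‖T‖ * ‖S k x‖ * ‖S k y‖ :=
          (norm_inner_le_norm _ _).trans (by gcongr; exact T.le_opNorm _)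
      _ ≤ _ := by
        rw [mul_assoc]
        gcongr
        nlinarith [sq_nonneg (‖S k x‖ - ‖S k y‖)]
  calc RCLike.re (inner 𝕜 ((∑ k ∈ s, adjoint (S k) ∘L T ∘L S k) x) y)
      ≤ ‖∑ k ∈ s, inner 𝕜 (T (S k x)) (S k y)‖ := by
        simp only [_root_.sum_apply, sum_inner, comp_apply, adjoint_inner_left]
        exact RCLike.re_le_norm _
    _ ≤ ∑ k ∈ s, ‖T‖ * ((‖S k x‖ ^ 2 + ‖S k y‖ ^ 2) / 2) :=
        (norm_sum_le _ _).trans (Finset.sum_le_sum fun k _ => hterm k)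
    _ ≤ ‖T‖ := by
        rw [← Finset.mul_sum, ← Finset.sum_div, Finset.sum_add_distrib]
        have := add_le_add (hS x) (hS y)
        rw [hx, hy] at this
        nlinarith [norm_nonneg T]

end ContinuousLinearMap

namespace Complex

lemma ofReal_re_pow_eq_sum (z : ℂ) (m : ℕ) :
    (z.re : ℂ) ^ m =
      ∑ j ∈ Finset.range (m + 1), (m.choose j / 2 ^ m : ℂ) * (z ^ j * star z ^ (m - j)) := by
  rw [re_eq_add_conj, div_pow, add_pow, Finset.sum_div]
  refine Finset.sum_congr rfl fun j _ => ?_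
  simp only [star_def]
  ring

lemma ofReal_im_pow_eq_sum (z : ℂ) (m : ℕ) :
    (z.im : ℂ) ^ m = ∑ j ∈ Finset.range (m + 1),
      ((-1) ^ (m - j) * m.choose j / (2 * I) ^ m : ℂ) * (z ^ j * star z ^ (m - j)) := by
  rw [im_eq_sub_conj, div_pow, sub_eq_add_neg, add_pow, Finset.sum_div]
  refine Finset.sum_congr rfl fun j _ => ?_
  rw [neg_pow, star_def]
  ring

end Complex

open scoped Matrix.Norms.L2Operator

namespace Matrix

variable {𝕜 n : Type*} [RCLike 𝕜]

lemma PosSemidef.norm_apply_sq_le {A : Matrix n n 𝕜} (hA : A.PosSemidef) (i j : n) :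
    ‖A i j‖ ^ 2 ≤ RCLike.re (A i i) * RCLike.re (A j j) := by
  have hdet := (hA.submatrix ![i, j]).det_nonneg
  have hji : A j i = star (A i j) := (hA.isHermitian.apply j i).symm
  simp only [det_fin_two, submatrix_apply, Matrix.cons_val_zero, Matrix.cons_val_one, hji,
    RCLike.star_def, RCLike.mul_conj, sub_nonneg] at hdet
  rw [← hA.isHermitian.coe_re_apply_self i, ← hA.isHermitian.coe_re_apply_self j] at hdet
  exact_mod_cast hdet

lemma PosSemidef.norm_apply_le_one {c : Matrix n n 𝕜} (hc : c.PosSemidef)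
    (hdiag : ∀ i, c i i = 1) (i j : n) : ‖c i j‖ ≤ 1 := by
  have h := hc.norm_apply_sq_le i j
  rwa [hdiag, hdiag, RCLike.one_re, mul_one, sq_le_one_iff₀ (norm_nonneg _)] at h

variable [Fintype n]

lemma PosSemidef.map_pow_mul_star_pow {c : Matrix n n 𝕜} (hc : c.PosSemidef) (p q : ℕ) :
    (c.map fun z => z ^ p * star z ^ q).PosSemidef := by
  have hstar : (c.map star).PosSemidef := by
    rw [show c.map star = cᵀ by ext i j; exact hc.isHermitian.apply j i]
    exact hc.transpose
  induction q with
  | succ q ih =>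
    convert hstar.hadamard ih using 1
    ext i j
    simp [pow_succ]; ring
  | zero =>
    induction p with
    | zero =>
      convert posSemidef_vecMulVec_self_star (1 : n → 𝕜) using 1
      ext i j
      simp [vecMulVec]
    | succ p ih =>
      convert hc.hadamard ih using 1
      ext i j
      simp [pow_succ]; ring

variable [DecidableEq n]

lemma sum_norm_sq_diagonal_mulVec_le {ι : Type*} (s : Finset ι) (w : ι → n → 𝕜)
    (hw : ∀ i, ∑ k ∈ s, ‖w k i‖ ^ 2 ≤ 1) (x : EuclideanSpace 𝕜 n) :
    ∑ k ∈ s, ‖toEuclideanCLM (n := n) (𝕜 := 𝕜) (diagonal (w k)) x‖ ^ 2 ≤ ‖x‖ ^ 2 := by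
  simp only [EuclideanSpace.norm_sq_eq, ofLp_toEuclideanCLM, mulVec_diagonal, norm_mul, mul_pow]
  rw [Finset.sum_comm]
  refine Finset.sum_le_sum fun i _ => ?_
  rw [← Finset.sum_mul]
  exact mul_le_of_le_one_left (by positivity) (hw i)

theorem l2_opNorm_hadamard_le_of_posSemidef (A G : Matrix n n 𝕜) (hG : G.PosSemidef)
    (hdiag : ∀ i, G i i ≤ 1) : ‖A ⊙ G‖ ≤ ‖A‖ := by
  obtain ⟨m, v, rfl⟩ := posSemidef_iff_eq_sum_vecMulVec.1 hG
  have hKraus : A ⊙ ∑ k, vecMulVec (v k) (star (v k)) =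
      ∑ k, star (diagonal (star (v k))) * A * diagonal (star (v k)) := by
    ext i j
    simp only [hadamard_apply, sum_apply, vecMulVec_apply, star_eq_conjTranspose,
      diagonal_conjTranspose, star_star, mul_diagonal, diagonal_mul, Finset.mul_sum]
    exact Finset.sum_congr rfl fun k _ => by simp only [Pi.star_apply]; ring
  have hw (i : n) : ∑ k, ‖star (v k) i‖ ^ 2 ≤ 1 := by
    have h := hdiag i
    simp only [sum_apply, vecMulVec_apply, Pi.star_apply, RCLike.star_def, RCLike.mul_conj] at h
    simp only [Pi.star_apply, norm_star]
    rw [← RCLike.ofReal_le_ofReal (K := 𝕜)]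
    push_cast
    exact h
  rw [hKraus, ← l2_opNorm_toEuclideanCLM, ← l2_opNorm_toEuclideanCLM, map_sum]
  simp only [map_mul, map_star, ContinuousLinearMap.star_eq_adjoint,
    ContinuousLinearMap.mul_def, ContinuousLinearMap.comp_assoc]
  exact ContinuousLinearMap.norm_sum_adjoint_comp_comp_le _
    (fun k => toEuclideanCLM (n := n) (𝕜 := 𝕜) (diagonal (star (v k)))) _
    (sum_norm_sq_diagonal_mulVec_le _ _ hw)

lemma l2_opNorm_map_star_le (A : Matrix n n 𝕜) : ‖A.map star‖ ≤ ‖A‖ := by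
  have hnorm (z : EuclideanSpace 𝕜 n) : ‖WithLp.toLp 2 (star (WithLp.ofLp z))‖ = ‖z‖ := by
    simp [EuclideanSpace.norm_eq]
  rw [← l2_opNorm_toEuclideanCLM, ← l2_opNorm_toEuclideanCLM]
  refine ContinuousLinearMap.opNorm_le_bound _ (norm_nonneg _) fun x => ?_
  have hconj : toEuclideanCLM (n := n) (𝕜 := 𝕜) (A.map star) x = WithLp.toLp 2
      (star (WithLp.ofLp (toEuclideanCLM (n := n) (𝕜 := 𝕜) A (WithLp.toLp 2 (star x.ofLp))))) := by
    ext i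
    simp [mulVec, dotProduct, star_sum, mul_comm]
  rw [hconj, hnorm, ← hnorm x]
  exact ContinuousLinearMap.le_opNorm _ _

lemma l2_opNorm_map_star (A : Matrix n n 𝕜) : ‖A.map star‖ = ‖A‖ :=
  (l2_opNorm_map_star_le A).antisymm <| by
    simpa [Matrix.map_map, Function.comp_def] using l2_opNorm_map_star_le (A.map star)

theorem l2_opNorm_map_pow_mul_star_pow_le {c : Matrix n n 𝕜} (hc : c.PosSemidef)
    (hdiag : ∀ i, c i i = 1) {p q : ℕ} (hpq : p + q ≠ 0) :
    ‖c.map fun z => z ^ p * star z ^ q‖ ≤ ‖c‖ := by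
  have hdiag' (p q : ℕ) (i : n) : (c.map fun z => z ^ p * star z ^ q) i i ≤ 1 := by
    simp [hdiag i]
  rcases p with _ | p
  · obtain ⟨q, rfl⟩ := Nat.exists_eq_succ_of_ne_zero (by simpa using hpq)
    calc _ = ‖c.map star ⊙ c.map fun z => z ^ 0 * star z ^ q‖ := by
          congr 1; ext i j; simp [pow_succ, mul_comm]
      _ ≤ ‖c.map star‖ :=
          l2_opNorm_hadamard_le_of_posSemidef _ _ (hc.map_pow_mul_star_pow 0 q) (hdiag' 0 q)
      _ = ‖c‖ := l2_opNorm_map_star c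
  · calc _ = ‖c ⊙ c.map fun z => z ^ p * star z ^ q‖ := by
          congr 1; ext i j; simp [pow_succ]; ring
      _ ≤ ‖c‖ :=
          l2_opNorm_hadamard_le_of_posSemidef _ _ (hc.map_pow_mul_star_pow p q) (hdiag' p q)

theorem l2_opNorm_map_sum_pow_mul_star_pow_le {c : Matrix n n 𝕜} (hc : c.PosSemidef)
    (hdiag : ∀ i, c i i = 1) {m : ℕ} (hm : m ≠ 0) (w : ℕ → 𝕜)
    (hw : ∀ j, ‖w j‖ = m.choose j / 2 ^ m) :
    ‖c.map fun z => ∑ j ∈ Finset.range (m + 1), w j * (z ^ j * star z ^ (m - j))‖ ≤ ‖c‖ := by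
  have hsum : (c.map fun z => ∑ j ∈ Finset.range (m + 1), w j * (z ^ j * star z ^ (m - j))) =
      ∑ j ∈ Finset.range (m + 1), w j • c.map fun z => z ^ j * star z ^ (m - j) := by
    ext i k
    simp [sum_apply]
  have hmass : ∑ j ∈ Finset.range (m + 1), ‖w j‖ = 1 := by
    simp_rw [hw, ← Finset.sum_div]
    rw [div_eq_one_iff_eq (by positivity)]
    exact_mod_cast m.sum_range_choose
  rw [hsum]
  calc _ ≤ ∑ j ∈ Finset.range (m + 1), ‖w j‖ * ‖c‖ := by
        refine (norm_sum_le _ _).trans (Finset.sum_le_sum fun j hj => ?_)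
        rw [norm_smul]
        gcongr
        exact l2_opNorm_map_pow_mul_star_pow_le hc hdiag (by omega)
    _ = ‖c‖ := by rw [← Finset.sum_mul, hmass, one_mul]

lemma l2_opNorm_map_re_pow_le {c : Matrix n n ℂ} (hc : c.PosSemidef) (hdiag : ∀ i, c i i = 1)
    {m : ℕ} (hm : m ≠ 0) : ‖c.map fun z => (z.re : ℂ) ^ m‖ ≤ ‖c‖ := by
  simp_rw [Complex.ofReal_re_pow_eq_sum]
  exact l2_opNorm_map_sum_pow_mul_star_pow_le hc hdiag hm _ fun j => by simp

lemma l2_opNorm_map_im_pow_le {c : Matrix n n ℂ} (hc : c.PosSemidef) (hdiag : ∀ i, c i i = 1)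
    {m : ℕ} (hm : m ≠ 0) : ‖c.map fun z => (z.im : ℂ) ^ m‖ ≤ ‖c‖ := by
  simp_rw [Complex.ofReal_im_pow_eq_sum]
  exact l2_opNorm_map_sum_pow_mul_star_pow_le hc hdiag hm _ fun j => by simp

end Matrix

section ArcsineLaw

open Real

variable {M : ℕ}

lemma specNorm_eq_l2_opNorm (A : Matrix (Fin M) (Fin M) ℂ) : specNorm A = ‖A‖ := rfl

lemma hasSum_arcsineMap {c : Matrix (Fin M) (Fin M) ℂ} (hc : c.PosSemidef)
    (hdiag : ∀ i, c i i = 1) :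
    HasSum (fun k => ((2 / π * arcsinCoeff k : ℝ) : ℂ) •
      ((c.map fun z => (z.re : ℂ) ^ (2 * k + 1)) +
        Complex.I • c.map fun z => (z.im : ℂ) ^ (2 * k + 1))) (arcsineMap c) := by
  refine Pi.hasSum.2 fun i => Pi.hasSum.2 fun j => ?_
  have hre := (Complex.abs_re_le_norm _).trans (hc.norm_apply_le_one hdiag i j)
  have him := (Complex.abs_im_le_norm _).trans (hc.norm_apply_le_one hdiag i j)
  have h := ((Complex.hasSum_ofReal.2 (hasSum_arcsin hre)).add
    ((Complex.hasSum_ofReal.2 (hasSum_arcsin him)).mul_left Complex.I)).mul_left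
      ((2 / π : ℝ) : ℂ)
  simp only [arcsineMap, of_apply, hdiag, Complex.one_re, sqrt_one, mul_one, div_one]
  refine h.congr_fun fun k => ?_
  simp only [Matrix.smul_apply, Matrix.add_apply, map_apply, smul_eq_mul]
  push_cast
  ring

theorem l2_opNorm_arcsineMap_le {c : Matrix (Fin M) (Fin M) ℂ} (hc : c.PosSemidef)
    (hdiag : ∀ i, c i i = 1) : ‖arcsineMap c‖ ≤ 2 * ‖c‖ := by
  have hbound := (hasSum_arcsinCoeff.mul_left (2 / π * (2 * ‖c‖)))
  rw [show 2 / π * (2 * ‖c‖) * (π / 2) = 2 * ‖c‖ by field_simp] at hbound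
  refine (hasSum_arcsineMap hc hdiag).norm_le_of_bounded hbound fun k => ?_
  have hm : 2 * k + 1 ≠ 0 := by omega
  have hcoeff : 0 ≤ 2 / π * arcsinCoeff k := mul_nonneg (by positivity) (arcsinCoeff_nonneg k)
  have hterm : ‖(c.map fun z => (z.re : ℂ) ^ (2 * k + 1)) +
      Complex.I • c.map fun z => (z.im : ℂ) ^ (2 * k + 1)‖ ≤ ‖c‖ + ‖c‖ := by
    refine (norm_add_le _ _).trans (add_le_add (l2_opNorm_map_re_pow_le hc hdiag hm) ?_)
    rw [norm_smul, Complex.norm_I, one_mul]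
    exact l2_opNorm_map_im_pow_le hc hdiag hm
  rw [norm_smul, Complex.norm_real, norm_of_nonneg hcoeff]
  calc _ ≤ 2 / π * arcsinCoeff k * (‖c‖ + ‖c‖) := mul_le_mul_of_nonneg_left hterm hcoeff
    _ = _ := by ring

lemma dInvSqrt_mul_mul_dInvSqrt_apply (C : Matrix (Fin M) (Fin M) ℂ) (i j : Fin M) :
    (dInvSqrt C * C * dInvSqrt C) i j = C i j / ((√(C i i).re * √(C j j).re : ℝ) : ℂ) := by
  simp only [dInvSqrt, mul_diagonal, diagonal_mul]
  push_cast
  ring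

lemma dInvSqrt_mul_mul_dInvSqrt_apply_self {C : Matrix (Fin M) (Fin M) ℂ} (hC : C.IsHermitian)
    (hpos : ∀ i, 0 < (C i i).re) (i : Fin M) : (dInvSqrt C * C * dInvSqrt C) i i = 1 := by
  rw [dInvSqrt_mul_mul_dInvSqrt_apply, mul_self_sqrt (hpos i).le, ← hC.coe_re_apply_self i]
  exact div_self (Complex.ofReal_ne_zero.2 (hpos i).ne')

lemma posSemidef_dInvSqrt_mul_mul_dInvSqrt {C : Matrix (Fin M) (Fin M) ℂ} (hC : C.PosSemidef) :
    (dInvSqrt C * C * dInvSqrt C).PosSemidef := by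
  have hD : (dInvSqrt C)ᴴ = dInvSqrt C := by
    simp [dInvSqrt, diagonal_conjTranspose]
  simpa [hD] using hC.conjTranspose_mul_mul_same (dInvSqrt C)

lemma arcsineMap_dInvSqrt_mul_mul_dInvSqrt {C : Matrix (Fin M) (Fin M) ℂ} (hC : C.IsHermitian)
    (hpos : ∀ i, 0 < (C i i).re) : arcsineMap (dInvSqrt C * C * dInvSqrt C) = arcsineMap C := by
  ext i j
  simp only [arcsineMap, of_apply, dInvSqrt_mul_mul_dInvSqrt_apply_self hC hpos,
    dInvSqrt_mul_mul_dInvSqrt_apply C i j, Complex.div_ofReal_re, Complex.div_ofReal_im,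
    Complex.one_re, sqrt_one, mul_one, div_one]

lemma l2_opNorm_dInvSqrt_le {C : Matrix (Fin M) (Fin M) ℂ} {α : ℝ} (hα : 0 < α)
    (hdiag : ∀ i, α ≤ (C i i).re) : ‖dInvSqrt C‖ ≤ (√α)⁻¹ := by
  rw [dInvSqrt, l2_opNorm_diagonal, pi_norm_le_iff_of_nonneg (by positivity)]
  intro i
  rw [norm_inv, Complex.norm_real, norm_of_nonneg (sqrt_nonneg _)]
  exact inv_anti₀ (sqrt_pos.2 hα) (sqrt_le_sqrt (hdiag i))

lemma l2_opNorm_dInvSqrt_mul_mul_dInvSqrt_le {C : Matrix (Fin M) (Fin M) ℂ} {α : ℝ}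
    (hα : 0 < α) (hdiag : ∀ i, α ≤ (C i i).re) : ‖dInvSqrt C * C * dInvSqrt C‖ ≤ ‖C‖ / α := by
  have hD := l2_opNorm_dInvSqrt_le hα hdiag
  calc _ ≤ ‖dInvSqrt C‖ * ‖C‖ * ‖dInvSqrt C‖ :=
        (l2_opNorm_mul _ _).trans (by gcongr; exact l2_opNorm_mul _ _)
    _ ≤ (√α)⁻¹ * ‖C‖ * (√α)⁻¹ := by gcongr
    _ = ‖C‖ / α := by
        rw [mul_comm, ← mul_assoc, ← mul_inv, mul_self_sqrt hα.le, inv_mul_eq_div]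

end ArcsineLaw

/-- if C is Hermitian PSD with min_i [C]_{ii} ≥ α > 0, then
‖P_arcsine(C)‖ ≤ (2/α)·‖C‖ in spectral norm. -/
theorem stmt7 {M : ℕ} (α : ℝ) (hα : 0 < α) (C : Matrix (Fin M) (Fin M) ℂ)
    (hC : C.PosSemidef) (hdiag : ∀ i, α ≤ (C i i).re) :
    specNorm (arcsineMap C) ≤ (2 / α) * specNorm C := by
  have hpos (i : Fin M) : 0 < (C i i).re := hα.trans_le (hdiag i)
  calc specNorm (arcsineMap C) = ‖arcsineMap (dInvSqrt C * C * dInvSqrt C)‖ := by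
        rw [arcsineMap_dInvSqrt_mul_mul_dInvSqrt hC.isHermitian hpos, specNorm_eq_l2_opNorm]
    _ ≤ 2 * ‖dInvSqrt C * C * dInvSqrt C‖ := l2_opNorm_arcsineMap_le
        (posSemidef_dInvSqrt_mul_mul_dInvSqrt hC)
        (dInvSqrt_mul_mul_dInvSqrt_apply_self hC.isHermitian hpos)
    _ ≤ 2 * (‖C‖ / α) := by gcongr; exact l2_opNorm_dInvSqrt_mul_mul_dInvSqrt_le hα hdiag
    _ = 2 / α * specNorm C := by rw [specNorm_eq_l2_opNorm]; ring

end
end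

section
/- Let α > 0, ε_∞ ≤ α/2, and let C, Ĉ ∈ ℂ^{M×M} be Hermitian matrices such that min_i [C]_{i,i} ≥ α and ‖Ĉ − C‖_∞ ≤ ε_∞. Then min_i [Ĉ]_{i,i} ≥ α/2, and the matrices A = √(2/π)·diag(C)^{−1/2} and Â = √(2/π)·diag(Ĉ)^{−1/2} satisfy ‖A − Â‖ ≤ (4/π)·α^{−3/2}·ε_∞, where ‖·‖ is the spectral (operator) norm. -/
open MeasureTheory ProbabilityTheory Matrix
open scoped ComplexOrder

noncomputable section

/-! Both gains are diagonal, so the spectral norm of their difference is the largest gap between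
diagonal entries. For one entry, `|a^{-1/2} - b^{-1/2}| = |a - b| / (√a √b (√a + √b))`, and with
`a ≥ α`, `b ≥ α - ε_∞ ≥ α / 2` the denominator is at least `α^{3/2} / √2`. The constant then
comes from `√(2/π) · √2 = 2 / √π ≤ 4 / π`, i.e. `π ≤ 4`. -/

open Real
open scoped Matrix.Norms.L2Operator

lemma norm_apply_le_maxNorm {M : ℕ} (A : Matrix (Fin M) (Fin M) ℂ) (i j : Fin M) :
    ‖A i j‖ ≤ maxNorm A :=
  (le_ciSup (Set.finite_range fun j => ‖A i j‖).bddAbove j).trans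
    (le_ciSup (Set.finite_range fun i => ⨆ j, ‖A i j‖).bddAbove i)

lemma maxNorm_nonneg {M : ℕ} (A : Matrix (Fin M) (Fin M) ℂ) : 0 ≤ maxNorm A :=
  Real.iSup_nonneg fun _ => Real.iSup_nonneg fun _ => norm_nonneg _

lemma abs_re_sub_re_le_maxNorm {M : ℕ} (A B : Matrix (Fin M) (Fin M) ℂ) (i j : Fin M) :
    |(A i j).re - (B i j).re| ≤ maxNorm (A - B) := by
  simpa only [Matrix.sub_apply, Complex.sub_re] using
    (Complex.abs_re_le_norm _).trans (norm_apply_le_maxNorm (A - B) i j)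

lemma specNorm_smul {M : ℕ} (c : ℂ) (A : Matrix (Fin M) (Fin M) ℂ) :
    specNorm (c • A) = ‖c‖ * specNorm A :=
  norm_smul c A

lemma specNorm_diagonal {M : ℕ} (v : Fin M → ℂ) : specNorm (diagonal v) = ‖v‖ :=
  l2_opNorm_diagonal v

lemma dInvSqrt_sub_dInvSqrt {M : ℕ} (C D : Matrix (Fin M) (Fin M) ℂ) :
    dInvSqrt C - dInvSqrt D =
      diagonal fun i => (((√(C i i).re)⁻¹ - (√(D i i).re)⁻¹ : ℝ) : ℂ) := by
  simp only [dInvSqrt, diagonal_sub, Complex.ofReal_sub, Complex.ofReal_inv]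

lemma abs_inv_sqrt_sub_inv_sqrt {a b : ℝ} (ha : 0 < a) (hb : 0 < b) :
    |(√a)⁻¹ - (√b)⁻¹| = |a - b| / (√a * √b * (√a + √b)) := by
  have hsa := Real.sqrt_pos.2 ha
  have hsb := Real.sqrt_pos.2 hb
  have hdiff : (√a)⁻¹ - (√b)⁻¹ = (b - a) / (√a * √b * (√a + √b)) := by
    have hsq : b - a = √b ^ 2 - √a ^ 2 := by rw [Real.sq_sqrt ha.le, Real.sq_sqrt hb.le]
    rw [hsq]
    field_simp
    ring
  rw [hdiff, abs_div, abs_sub_comm, abs_of_pos (by positivity : 0 < √a * √b * (√a + √b))]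

lemma abs_inv_sqrt_sub_inv_sqrt_le {α a b : ℝ} (hα : 0 < α) (ha : α ≤ a) (hb : α / 2 ≤ b) :
    |(√a)⁻¹ - (√b)⁻¹| ≤ √2 * α ^ (-3 / 2 : ℝ) * |a - b| := by
  have hs : 0 < √α := Real.sqrt_pos.2 hα
  have hsa : √α ≤ √a := Real.sqrt_le_sqrt ha
  have hsb : √α / √2 ≤ √b := by rw [← Real.sqrt_div hα.le]; exact Real.sqrt_le_sqrt hb
  have hpow : α ^ (-3 / 2 : ℝ) = (√α * √α * √α)⁻¹ := by
    rw [Real.sqrt_eq_rpow, ← Real.rpow_add hα, ← Real.rpow_add hα, ← Real.rpow_neg hα.le]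
    norm_num
  have hden : √α * (√α / √2) * √α ≤ √a * √b * (√a + √b) := by
    gcongr
    linarith [Real.sqrt_nonneg b]
  rw [abs_inv_sqrt_sub_inv_sqrt (hα.trans_le ha) (by linarith), hpow]
  calc |a - b| / (√a * √b * (√a + √b)) ≤ |a - b| / (√α * (√α / √2) * √α) := by
        gcongr
    _ = √2 * (√α * √α * √α)⁻¹ * |a - b| := by field_simp

lemma specNorm_dInvSqrt_sub_le {M : ℕ} {α : ℝ} (hα : 0 < α) (C D : Matrix (Fin M) (Fin M) ℂ)
    (hC : ∀ i, α ≤ (C i i).re) (hD : ∀ i, α / 2 ≤ (D i i).re) :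
    specNorm (dInvSqrt C - dInvSqrt D) ≤ √2 * α ^ (-3 / 2 : ℝ) * maxNorm (D - C) := by
  rw [dInvSqrt_sub_dInvSqrt, specNorm_diagonal]
  refine (pi_norm_le_iff_of_nonneg (mul_nonneg (by positivity) (maxNorm_nonneg _))).2 fun i => ?_
  rw [Complex.norm_real, Real.norm_eq_abs]
  calc _ ≤ √2 * α ^ (-3 / 2 : ℝ) * |(C i i).re - (D i i).re| :=
        abs_inv_sqrt_sub_inv_sqrt_le hα (hC i) (hD i)
    _ ≤ √2 * α ^ (-3 / 2 : ℝ) * maxNorm (D - C) := by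
        rw [abs_sub_comm]
        gcongr
        exact abs_re_sub_re_le_maxNorm D C i i

lemma sqrt_two_div_pi_mul_sqrt_two_le : √(2 / π) * √2 ≤ 4 / π := by
  rw [← Real.sqrt_mul (by positivity), Real.sqrt_le_iff]
  refine ⟨by positivity, ?_⟩
  have h : 1 ≤ 4 / π := by rw [le_div_iff₀ Real.pi_pos]; linarith [Real.pi_le_four]
  calc 2 / π * 2 = 4 / π * 1 := by ring
    _ ≤ (4 / π) ^ 2 := by rw [sq]; gcongr

theorem stmt8_general {M : ℕ} (α epsInf : ℝ) (hα : 0 < α) (heps : epsInf ≤ α / 2)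
    (C Chat : Matrix (Fin M) (Fin M) ℂ)
    (hdiag : ∀ i, α ≤ (C i i).re) (hclose : maxNorm (Chat - C) ≤ epsInf) :
    (∀ i, α / 2 ≤ (Chat i i).re) ∧
    specNorm (busA C - busA Chat) ≤ (4 / Real.pi) * α ^ ((-3 : ℝ)/2) * epsInf := by
  have hdiagChat : ∀ i, α / 2 ≤ (Chat i i).re := fun i => by
    linarith [abs_le.1 ((abs_re_sub_re_le_maxNorm Chat C i i).trans hclose), hdiag i]
  refine ⟨hdiagChat, ?_⟩
  rw [busA, busA, ← smul_sub, specNorm_smul, Complex.norm_real, Real.norm_eq_abs,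
    abs_of_nonneg (Real.sqrt_nonneg _)]
  calc √(2 / π) * specNorm (dInvSqrt C - dInvSqrt Chat)
      ≤ √(2 / π) * (√2 * α ^ (-3 / 2 : ℝ) * epsInf) := by
        gcongr
        exact (specNorm_dInvSqrt_sub_le hα C Chat hdiag hdiagChat).trans
          (by gcongr)
    _ = √(2 / π) * √2 * α ^ (-3 / 2 : ℝ) * epsInf := by ring
    _ ≤ 4 / π * α ^ ((-3 : ℝ) / 2) * epsInf := by
        have hε : 0 ≤ epsInf := (maxNorm_nonneg _).trans hclose
        gcongr
        exact sqrt_two_div_pi_mul_sqrt_two_le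

/-- if min_i [C]_{ii} ≥ α and ‖Chat - C‖_∞ ≤ epsInf ≤ α/2, then
min_i [Chat]_{ii} ≥ α/2 and ‖A - Ahat‖ ≤ (4/π)·α^{-3/2}·epsInf for the Bussgang gains. -/
theorem stmt8 {M : ℕ} (α epsInf : ℝ) (hα : 0 < α) (heps : epsInf ≤ α / 2)
    (C Chat : Matrix (Fin M) (Fin M) ℂ) (hC : C.IsHermitian) (hChat : Chat.IsHermitian)
    (hdiag : ∀ i, α ≤ (C i i).re) (hclose : maxNorm (Chat - C) ≤ epsInf) :
    (∀ i, α / 2 ≤ (Chat i i).re) ∧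
    specNorm (busA C - busA Chat) ≤ (4 / Real.pi) * α ^ ((-3 : ℝ)/2) * epsInf :=
  stmt8_general α epsInf hα heps C Chat hdiag hclose

end
end
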